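/- arXiv:1106.2218 — 2 statements merged into one kernel-verified Lean document; each statement's English description precedes it below -/
import Mathlib

section
/- Let L be a semiexact reflection on a triangulated category T and let C be the associated semiexact coreflection, so that for every X there is a distinguished triangle CX → X → LX → ΣCX. Let 𝓒 denote the class of C-colocal objects and 𝓛 the class of L-local objects. Then 𝓒 = ⊾𝓛 and 𝓛 = 𝓒⊿. -/
/-!
Local and colocal objects are orthogonal: a map from a colocal object to a local `W` factors
through `c_W`, and `c_W = 0` because `c_W ≫ l_W = 0` while `l_W` is split mono. As `𝓒` contains
`0` and is closed under cofibres, it is closed under `Σⁿ` for `n ≥ 0` (cofibre of `X → 0`), which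
gives `𝓒 ⊆ ⊾𝓛` and `𝓛 ⊆ 𝓒⊿`. Conversely, if `X ∈ ⊾𝓛` then `l_X = 0`, so by exactness of
`CX → X → LX` the counit `c_X` is split epi, and a split epi counit of a coreflection is
invertible; dually for `𝓒⊿`.
-/

open CategoryTheory Category Limits Pretriangulated

universe v u

namespace Paper

section General

variable {T : Type u} [Category.{v} T]

/-- A full subcategory (given by its class of objects) is closed under retracts. -/
def ClosedUnderRetracts (S : Set T) : Prop :=
  ∀ ⦃A B : T⦄, A ∈ S → (∃ (i : B ⟶ A) (r : A ⟶ B), i ≫ r = 𝟙 B) → B ∈ S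

/-- A full subcategory is weakly reflective: every object admits a weak reflection into it. -/
def WeaklyReflective (S : Set T) : Prop :=
  ∀ X : T, ∃ (X' : T) (l : X ⟶ X'), X' ∈ S ∧
    ∀ ⦃Y : T⦄, Y ∈ S → ∀ f : X ⟶ Y, ∃ g : X' ⟶ Y, l ≫ g = f

/-- A full subcategory is weakly coreflective. -/
def WeaklyCoreflective (S : Set T) : Prop :=
  ∀ X : T, ∃ (X' : T) (c : X' ⟶ X), X' ∈ S ∧
    ∀ ⦃Y : T⦄, Y ∈ S → ∀ f : Y ⟶ X, ∃ g : Y ⟶ X', g ≫ c = f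

/-- A full subcategory is reflective: the inclusion has a left adjoint. -/
def ReflectiveSet (S : Set T) : Prop :=
  (ObjectProperty.ι (fun X => X ∈ S : ObjectProperty T)).IsRightAdjoint

/-- A full subcategory is coreflective: the inclusion has a right adjoint. -/
def CoreflectiveSet (S : Set T) : Prop :=
  (ObjectProperty.ι (fun X => X ∈ S : ObjectProperty T)).IsLeftAdjoint

end General

/-- The data of an endofunctor together with a natural transformation from the identity
(a candidate reflection with its unit). -/
structure ReflectionData (T : Type u) [Category.{v} T] where
  L : T ⥤ T
  unit : 𝟭 T ⟶ L

/-- The data of an endofunctor together with a natural transformation to the identity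
(a candidate coreflection with its counit). -/
structure CoreflectionData (T : Type u) [Category.{v} T] where
  C : T ⥤ T
  counit : C ⟶ 𝟭 T

section ReflData

variable {T : Type u} [Category.{v} T]

/-- The `L`-local objects: the essential image of `L`. -/
def ReflectionData.localObjects (R : ReflectionData T) : Set T := R.L.essImage

/-- `(L, l)` is a reflection: every morphism to an `L`-local object factors uniquely
through the unit. -/
def ReflectionData.IsReflection (R : ReflectionData T) : Prop :=
  ∀ ⦃X W : T⦄, W ∈ R.localObjects → ∀ f : X ⟶ W,
    ∃! g : R.L.obj X ⟶ W, R.unit.app X ≫ g = f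

/-- The `C`-colocal objects: the essential image of `C`. -/
def CoreflectionData.colocalObjects (Q : CoreflectionData T) : Set T := Q.C.essImage

/-- `(C, c)` is a coreflection: every morphism from a `C`-colocal object factors uniquely
through the counit. -/
def CoreflectionData.IsCoreflection (Q : CoreflectionData T) : Prop :=
  ∀ ⦃X W : T⦄, W ∈ Q.colocalObjects → ∀ f : W ⟶ X,
    ∃! g : W ⟶ Q.C.obj X, g ≫ Q.counit.app X = f

end ReflData

section Triangulated

variable {T : Type u} [Category.{v} T] [HasZeroObject T] [Preadditive T] [HasShift T ℤ]
  [∀ n : ℤ, (shiftFunctor T n).Additive] [Pretriangulated T]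

/-- Closed under fibres: the first vertex of a distinguished triangle whose second and third
vertices lie in `S` lies in `S`. -/
def ClosedUnderFibres (S : Set T) : Prop :=
  ∀ ⦃X Y Z : T⦄ (u : X ⟶ Y) (v : Y ⟶ Z) (w : Z ⟶ X⟦(1:ℤ)⟧),
    (Triangle.mk u v w ∈ distTriang T) → Y ∈ S → Z ∈ S → X ∈ S

/-- Closed under cofibres. -/
def ClosedUnderCofibres (S : Set T) : Prop :=
  ∀ ⦃X Y Z : T⦄ (u : X ⟶ Y) (v : Y ⟶ Z) (w : Z ⟶ X⟦(1:ℤ)⟧),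
    (Triangle.mk u v w ∈ distTriang T) → X ∈ S → Y ∈ S → Z ∈ S

/-- Closed under extensions. -/
def ClosedUnderExtensions (S : Set T) : Prop :=
  ∀ ⦃X Y Z : T⦄ (u : X ⟶ Y) (v : Y ⟶ Z) (w : Z ⟶ X⟦(1:ℤ)⟧),
    (Triangle.mk u v w ∈ distTriang T) → X ∈ S → Z ∈ S → Y ∈ S

/-- `^⊥D`: objects `X` with `T(X, ΣᵏD) = 0` for all `D ∈ D` and all integers `k`. -/
def leftOrth (D : Set T) : Set T :=
  {X | ∀ ⦃E : T⦄, E ∈ D → ∀ k : ℤ, ∀ f : X ⟶ E⟦k⟧, f = 0}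

/-- `D^⊥`: objects `Y` with `T(ΣᵏD, Y) = 0` for all `D ∈ D` and all integers `k`. -/
def rightOrth (D : Set T) : Set T :=
  {Y | ∀ ⦃E : T⦄, E ∈ D → ∀ k : ℤ, ∀ f : E⟦k⟧ ⟶ Y, f = 0}

/-- `⊾D`: objects `X` with `T(X, ΣᵏD) = 0` for all `D ∈ D` and all `k ≤ 0`. -/
def leftSemiOrth (D : Set T) : Set T :=
  {X | ∀ ⦃E : T⦄, E ∈ D → ∀ k : ℤ, k ≤ 0 → ∀ f : X ⟶ E⟦k⟧, f = 0}

/-- `D⊿`: objects `Y` with `T(ΣᵏD, Y) = 0` for all `D ∈ D` and all `k ≥ 0`. -/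
def rightSemiOrth (D : Set T) : Set T :=
  {Y | ∀ ⦃E : T⦄, E ∈ D → ∀ k : ℤ, 0 ≤ k → ∀ f : E⟦k⟧ ⟶ Y, f = 0}

section WithLimits

variable [HasProducts.{v} T] [HasCoproducts.{v} T]

/-- Closed under all (small) products. -/
def ClosedUnderProducts (S : Set T) : Prop :=
  ∀ ⦃ι : Type v⦄ (f : ι → T), (∀ i, f i ∈ S) → (∏ᶜ f) ∈ S

/-- Closed under all (small) coproducts. -/
def ClosedUnderCoproducts (S : Set T) : Prop :=
  ∀ ⦃ι : Type v⦄ (f : ι → T), (∀ i, f i ∈ S) → (∐ f) ∈ S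

/-- Semilocalizing: closed under coproducts, cofibres and extensions. -/
def IsSemilocalizing (S : Set T) : Prop :=
  ClosedUnderCoproducts S ∧ ClosedUnderCofibres S ∧ ClosedUnderExtensions S

/-- Semicolocalizing: closed under products, fibres and extensions. -/
def IsSemicolocalizing (S : Set T) : Prop :=
  ClosedUnderProducts S ∧ ClosedUnderFibres S ∧ ClosedUnderExtensions S

/-- Localizing: closed under coproducts, fibres, cofibres and extensions. -/
def IsLocalizing (S : Set T) : Prop :=
  ClosedUnderCoproducts S ∧ ClosedUnderFibres S ∧ ClosedUnderCofibres S ∧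
    ClosedUnderExtensions S

/-- Colocalizing: closed under products, fibres, cofibres and extensions. -/
def IsColocalizing (S : Set T) : Prop :=
  ClosedUnderProducts S ∧ ClosedUnderFibres S ∧ ClosedUnderCofibres S ∧
    ClosedUnderExtensions S

/-- The smallest semilocalizing subcategory containing `D`. -/
def semiloc (D : Set T) : Set T := ⋂₀ {S : Set T | IsSemilocalizing S ∧ D ⊆ S}

/-- The smallest semicolocalizing subcategory containing `D`. -/
def semicoloc (D : Set T) : Set T := ⋂₀ {S : Set T | IsSemicolocalizing S ∧ D ⊆ S}

/-- The smallest localizing subcategory containing `D`. -/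
def loc (D : Set T) : Set T := ⋂₀ {S : Set T | IsLocalizing S ∧ D ⊆ S}

/-- The smallest colocalizing subcategory containing `D`. -/
def coloc (D : Set T) : Set T := ⋂₀ {S : Set T | IsColocalizing S ∧ D ⊆ S}

end WithLimits

end Triangulated

section Reflections

variable {T : Type u} [Category.{v} T]

namespace CoreflectionData

variable {Q : CoreflectionData T}

lemma isIso_counit_app_of_comp_eq_id (hQ : Q.IsCoreflection) {X : T}
    (s : X ⟶ Q.C.obj X) (hs : s ≫ Q.counit.app X = 𝟙 X) : IsIso (Q.counit.app X) :=
  ⟨s, (hQ (Q.C.obj_mem_essImage X) (Q.counit.app X)).unique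
    (by simp only [Functor.id_obj, assoc, hs, comp_id]) (id_comp _), hs⟩

lemma mem_colocalObjects_of_comp_eq_id (hQ : Q.IsCoreflection) {X : T}
    (s : X ⟶ Q.C.obj X) (hs : s ≫ Q.counit.app X = 𝟙 X) : X ∈ Q.colocalObjects :=
  have := isIso_counit_app_of_comp_eq_id hQ s hs
  ⟨X, ⟨asIso (Q.counit.app X)⟩⟩

open ZeroObject in
lemma zero_mem_colocalObjects [HasZeroMorphisms T] [HasZeroObject T] (hQ : Q.IsCoreflection) :
    (0 : T) ∈ Q.colocalObjects :=
  mem_colocalObjects_of_comp_eq_id hQ 0 ((isZero_zero T).eq_of_src _ _)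

end CoreflectionData

namespace ReflectionData

variable {R : ReflectionData T}

lemma isIso_unit_app_of_comp_eq_id (hR : R.IsReflection) {X : T}
    (r : R.L.obj X ⟶ X) (hr : R.unit.app X ≫ r = 𝟙 X) : IsIso (R.unit.app X) :=
  ⟨r, hr, (hR (R.L.obj_mem_essImage X) (R.unit.app X)).unique
    (by simp only [Functor.id_obj, ← assoc, hr, id_comp]) (comp_id _)⟩

lemma mem_localObjects_of_comp_eq_id (hR : R.IsReflection) {X : T}
    (r : R.L.obj X ⟶ X) (hr : R.unit.app X ≫ r = 𝟙 X) : X ∈ R.localObjects :=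
  have := isIso_unit_app_of_comp_eq_id hR r hr
  ⟨X, ⟨(asIso (R.unit.app X)).symm⟩⟩

end ReflectionData

end Reflections

section SemiOrthogonal

variable {T : Type u} [Category.{v} T] [Preadditive T] [HasShift T ℤ]

lemma eq_zero_of_mem_leftSemiOrth {D : Set T} {X E : T} (hX : X ∈ leftSemiOrth D)
    (hE : E ∈ D) (f : X ⟶ E) : f = 0 := by
  rw [← cancel_mono ((shiftFunctorZero T ℤ).inv.app E), zero_comp]
  exact hX hE 0 le_rfl _

lemma eq_zero_of_mem_rightSemiOrth {D : Set T} {E Y : T} (hY : Y ∈ rightSemiOrth D)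
    (hE : E ∈ D) (f : E ⟶ Y) : f = 0 := by
  rw [← cancel_epi ((shiftFunctorZero T ℤ).hom.app E), comp_zero]
  exact hY hE 0 le_rfl _

end SemiOrthogonal

section TriangulatedReflections

variable {T : Type u} [Category.{v} T] [HasZeroObject T] [Preadditive T] [HasShift T ℤ]
  [∀ n : ℤ, (shiftFunctor T n).Additive] [Pretriangulated T]

open ZeroObject

namespace ClosedUnderCofibres

variable {S : Set T}

lemma mem_of_iso (hS : ClosedUnderCofibres S) (h0 : (0 : T) ∈ S) {X Y : T} (e : X ≅ Y)
    (hX : X ∈ S) : Y ∈ S := by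
  refine hS (0 : 0 ⟶ X) e.hom (0 : Y ⟶ (0 : T)⟦(1 : ℤ)⟧) ?_ h0 hX
  refine isomorphic_distinguished _ (contractible_distinguished₁ X) _ ?_
  exact Triangle.isoMk _ _ (Iso.refl _) (Iso.refl _) e.symm (zero_comp.trans comp_zero.symm)
    (e.hom_inv_id.trans (id_comp _).symm) (zero_comp.trans comp_zero.symm)

lemma shift_one_mem (hS : ClosedUnderCofibres S) (h0 : (0 : T) ∈ S) {X : T} (hX : X ∈ S) :
    X⟦(1 : ℤ)⟧ ∈ S :=
  hS _ _ _ (contractible_distinguished₂ X) hX h0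

lemma shift_mem (hS : ClosedUnderCofibres S) (h0 : (0 : T) ∈ S) {X : T} (hX : X ∈ S)
    (n : ℕ) : X⟦(n : ℤ)⟧ ∈ S := by
  induction n with
  | zero => exact hS.mem_of_iso h0 ((shiftFunctorZero T ℤ).symm.app X) hX
  | succ n ih =>
    exact hS.mem_of_iso h0 ((shiftFunctorAdd' T (n : ℤ) 1 _ (by push_cast; ring)).symm.app X)
      (hS.shift_one_mem h0 ih)

end ClosedUnderCofibres

namespace CoreflectionData

def IsFibreOf (Q : CoreflectionData T) (R : ReflectionData T) : Prop :=
  ∀ X : T, ∃ w : R.L.obj X ⟶ (Q.C.obj X)⟦(1:ℤ)⟧,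
    Triangle.mk (Q.counit.app X) (R.unit.app X) w ∈ distTriang T

namespace IsFibreOf

variable {Q : CoreflectionData T} {R : ReflectionData T}

lemma counit_app_eq_zero (hQR : Q.IsFibreOf R) (hR : R.IsReflection) {W : T}
    (hW : W ∈ R.localObjects) : Q.counit.app W = 0 := by
  obtain ⟨w, hT⟩ := hQR W
  obtain ⟨r, hr, -⟩ := hR hW (𝟙 W)
  have hcomp : Q.counit.app W ≫ R.unit.app W = 0 := comp_distTriang_mor_zero₁₂ _ hT
  calc Q.counit.app W = (Q.counit.app W ≫ R.unit.app W) ≫ r := by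
        rw [assoc, hr]; exact (comp_id _).symm
    _ = 0 := by rw [hcomp, zero_comp]

lemma hom_eq_zero (hQR : Q.IsFibreOf R) (hR : R.IsReflection) (hQ : Q.IsCoreflection)
    {X W : T} (hX : X ∈ Q.colocalObjects) (hW : W ∈ R.localObjects) (f : X ⟶ W) : f = 0 := by
  obtain ⟨g, rfl, -⟩ := hQ hX f
  rw [hQR.counit_app_eq_zero hR hW, comp_zero]

lemma mem_colocalObjects_of_unit_app_eq_zero (hQR : Q.IsFibreOf R) (hQ : Q.IsCoreflection)
    {X : T} (h : R.unit.app X = 0) : X ∈ Q.colocalObjects := by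
  obtain ⟨w, hT⟩ := hQR X
  obtain ⟨s, hs⟩ := Triangle.coyoneda_exact₂ _ hT (𝟙 X)
    (show 𝟙 X ≫ R.unit.app X = 0 by rw [h, comp_zero])
  exact mem_colocalObjects_of_comp_eq_id hQ s hs.symm

lemma mem_localObjects_of_counit_app_eq_zero (hQR : Q.IsFibreOf R) (hR : R.IsReflection)
    {X : T} (h : Q.counit.app X = 0) : X ∈ R.localObjects := by
  obtain ⟨w, hT⟩ := hQR X
  obtain ⟨r, hr⟩ := Triangle.yoneda_exact₂ _ hT (𝟙 X)
    (show Q.counit.app X ≫ 𝟙 X = 0 by rw [h, zero_comp])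
  exact ReflectionData.mem_localObjects_of_comp_eq_id hR r hr.symm

lemma colocalObjects_subset_leftSemiOrth (hQR : Q.IsFibreOf R) (hR : R.IsReflection)
    (hQ : Q.IsCoreflection) (hcof : ClosedUnderCofibres Q.colocalObjects) :
    Q.colocalObjects ⊆ leftSemiOrth R.localObjects := by
  intro X hX E hE k hk f
  obtain ⟨n, hn⟩ := Int.eq_ofNat_of_zero_le (neg_nonneg.mpr hk)
  let e : E⟦k⟧⟦(n : ℤ)⟧ ≅ E := (shiftFunctorCompIsoId T k n (by omega)).app E
  apply (shiftFunctor T (n : ℤ)).map_injective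
  rw [Functor.map_zero, ← cancel_mono e.hom, zero_comp]
  exact hQR.hom_eq_zero hR hQ (hcof.shift_mem (zero_mem_colocalObjects hQ) hX n) hE _

lemma leftSemiOrth_subset_colocalObjects (hQR : Q.IsFibreOf R) (hQ : Q.IsCoreflection) :
    leftSemiOrth R.localObjects ⊆ Q.colocalObjects := fun X hX =>
  hQR.mem_colocalObjects_of_unit_app_eq_zero hQ
    (eq_zero_of_mem_leftSemiOrth hX (R.L.obj_mem_essImage X) _)

lemma localObjects_subset_rightSemiOrth (hQR : Q.IsFibreOf R) (hR : R.IsReflection)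
    (hQ : Q.IsCoreflection) (hcof : ClosedUnderCofibres Q.colocalObjects) :
    R.localObjects ⊆ rightSemiOrth Q.colocalObjects := by
  intro Y hY E hE k hk f
  obtain ⟨n, rfl⟩ := Int.eq_ofNat_of_zero_le hk
  exact hQR.hom_eq_zero hR hQ (hcof.shift_mem (zero_mem_colocalObjects hQ) hE n) hY f

lemma rightSemiOrth_subset_localObjects (hQR : Q.IsFibreOf R) (hR : R.IsReflection) :
    rightSemiOrth Q.colocalObjects ⊆ R.localObjects := fun Y hY =>
  hQR.mem_localObjects_of_counit_app_eq_zero hR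
    (eq_zero_of_mem_rightSemiOrth hY (Q.C.obj_mem_essImage Y) _)

end IsFibreOf

end CoreflectionData

end TriangulatedReflections

section Statements

variable {T : Type u} [Category.{v} T] [HasZeroObject T] [Preadditive T] [HasShift T ℤ]
  [∀ n : ℤ, (shiftFunctor T n).Additive] [Pretriangulated T]
  [HasProducts.{v} T] [HasCoproducts.{v} T]

theorem statement5_general (R : ReflectionData T) (Q : CoreflectionData T)
    (hrefl : R.IsReflection)
    (hcorefl : Q.IsCoreflection) (hsemi' : IsSemilocalizing Q.colocalObjects)
    (htri : ∀ X : T, ∃ w : R.L.obj X ⟶ (Q.C.obj X)⟦(1:ℤ)⟧,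
        Triangle.mk (Q.counit.app X) (R.unit.app X) w ∈ distTriang T) :
    Q.colocalObjects = leftSemiOrth R.localObjects ∧
    R.localObjects = rightSemiOrth Q.colocalObjects := by
  have hQR : Q.IsFibreOf R := htri
  have hcof := hsemi'.2.1
  exact ⟨(hQR.colocalObjects_subset_leftSemiOrth hrefl hcorefl hcof).antisymm
      (hQR.leftSemiOrth_subset_colocalObjects hcorefl),
    (hQR.localObjects_subset_rightSemiOrth hrefl hcorefl hcof).antisymm
      (hQR.rightSemiOrth_subset_localObjects hrefl)⟩

/-- If `L` is a semiexact reflection and `C` the associated semiexact coreflection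
(so that `CX → X → LX → ΣCX` is distinguished for every `X`), then the `C`-colocal class `𝓒`
and the `L`-local class `𝓛` satisfy `𝓒 = ⊾𝓛` and `𝓛 = 𝓒⊿`. -/
theorem statement5 (R : ReflectionData T) (Q : CoreflectionData T)
    (hrefl : R.IsReflection) (hsemi : IsSemicolocalizing R.localObjects)
    (hcorefl : Q.IsCoreflection) (hsemi' : IsSemilocalizing Q.colocalObjects)
    (htri : ∀ X : T, ∃ w : R.L.obj X ⟶ (Q.C.obj X)⟦(1:ℤ)⟧,
        Triangle.mk (Q.counit.app X) (R.unit.app X) w ∈ distTriang T) :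
    Q.colocalObjects = leftSemiOrth R.localObjects ∧
    R.localObjects = rightSemiOrth Q.colocalObjects :=
  statement5_general R Q hrefl hcorefl hsemi' htri

end Statements

end Paper
end

section
/- Let L be a semiexact reflection on a triangulated category T and let C be the associated semiexact coreflection (so CX → X → LX → ΣCX is a distinguished triangle for every X), with 𝓒 the class of C-colocal objects and 𝓛 the class of L-local objects. Then L is exact if and only if C is exact, and in that case 𝓒 = ^⊥𝓛 and 𝓛 = 𝓒^⊥. -/
open CategoryTheory Category Limits Pretriangulated

universe v u

namespace Paper

/-!
In the triangle `C X → X → L X → Σ C X`, the object `X` is `C`-colocal iff the unit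
`X → L X` vanishes (then the counit has a section) and `L`-local iff the counit vanishes.
Hence every map from a colocal to a local object factors through a zero unit. When `𝓛` is
colocalizing it is closed under shifts, so this gives `𝓒 ⊆ ^⊥𝓛`, while an object of `^⊥𝓛`
has zero unit; thus `𝓒 = ^⊥𝓛`, which is closed under fibres, making `𝓒` localizing.
The converse is dual.
-/

section Orthogonality

variable {T : Type u} [Category.{v} T] [Preadditive T] [HasShift T ℤ]

lemma hom_eq_zero_of_mem_leftOrth {D : Set T} {X E : T} (hX : X ∈ leftOrth D) (hE : E ∈ D)
    (f : X ⟶ E) : f = 0 := by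
  simpa [Preadditive.IsIso.comp_right_eq_zero] using
    hX hE 0 (f ≫ (shiftFunctorZero T ℤ).inv.app E)

lemma hom_eq_zero_of_mem_rightOrth {D : Set T} {Y E : T} (hY : Y ∈ rightOrth D) (hE : E ∈ D)
    (f : E ⟶ Y) : f = 0 := by
  simpa [Preadditive.IsIso.comp_left_eq_zero] using
    hY hE 0 ((shiftFunctorZero T ℤ).hom.app E ≫ f)

variable [∀ n : ℤ, (shiftFunctor T n).Additive]

lemma shift_mem_leftOrth {D : Set T} {X : T} (hX : X ∈ leftOrth D) (m : ℤ) :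
    X⟦m⟧ ∈ leftOrth D := by
  intro E hE k g
  -- after shifting by `-m`, `g` becomes a map `X ⟶ E⟦k - m⟧` up to isomorphisms
  apply (shiftFunctor T (-m)).map_injective
  simpa [Preadditive.IsIso.comp_left_eq_zero, Preadditive.IsIso.comp_right_eq_zero] using
    hX hE (k - m) ((shiftFunctorCompIsoId T m (-m) (add_neg_cancel m)).inv.app X ≫
      (shiftFunctor T (-m)).map g ≫ (shiftFunctorAdd' T k (-m) (k - m) (by ring)).inv.app E)

lemma shift_mem_rightOrth {D : Set T} {Y : T} (hY : Y ∈ rightOrth D) (m : ℤ) :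
    Y⟦m⟧ ∈ rightOrth D := by
  intro E hE k g
  apply (shiftFunctor T (-m)).map_injective
  simpa [Preadditive.IsIso.comp_left_eq_zero, Preadditive.IsIso.comp_right_eq_zero] using
    hY hE (k - m) ((shiftFunctorAdd' T k (-m) (k - m) (by ring)).hom.app E ≫
      (shiftFunctor T (-m)).map g ≫ (shiftFunctorCompIsoId T m (-m) (add_neg_cancel m)).hom.app Y)

variable [HasZeroObject T] [Pretriangulated T]

lemma closedUnderFibres_leftOrth (D : Set T) : ClosedUnderFibres (leftOrth D) := by
  intro X Y Z u v w hT hY hZ E hE k f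
  obtain ⟨g, hg⟩ := Triangle.yoneda_exact₂ _ (inv_rot_of_distTriang _ hT) f
    (shift_mem_leftOrth hZ (-1) hE k _)
  rw [hg, hY hE k g]
  exact comp_zero

lemma closedUnderCofibres_rightOrth (D : Set T) : ClosedUnderCofibres (rightOrth D) := by
  intro X Y Z u v w hT hX hY E hE k f
  obtain ⟨g, hg⟩ := Triangle.coyoneda_exact₂ _ (rot_of_distTriang _ hT) f
    (shift_mem_rightOrth hX 1 hE k _)
  rw [hg, hY hE k g]
  exact zero_comp

open ZeroObject in
lemma shift_mem_of_closedUnderFibres_of_closedUnderCofibres {S : Set T}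
    (hiso : ∀ ⦃A B : T⦄, (A ≅ B) → A ∈ S → B ∈ S)
    (hfib : ClosedUnderFibres S) (hcof : ClosedUnderCofibres S) {X : T} (hX : X ∈ S) (k : ℤ) :
    X⟦k⟧ ∈ S := by
  have hzero : (0 : T) ∈ S := hcof _ _ _ (contractible_distinguished X) hX hX
  have hup : ∀ ⦃Y : T⦄, Y ∈ S → Y⟦(1 : ℤ)⟧ ∈ S := fun Y hY =>
    hcof _ _ _ (rot_of_distTriang _ (contractible_distinguished Y)) hY hzero
  have hdown : ∀ ⦃Y : T⦄, Y ∈ S → Y⟦(-1 : ℤ)⟧ ∈ S := fun Y hY =>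
    hfib _ _ _ (rot_of_distTriang _ (contractible_distinguished (Y⟦(-1 : ℤ)⟧))) hzero
      (hiso ((shiftFunctorCompIsoId T (-1 : ℤ) 1 (by ring)).app Y).symm hY)
  induction k using Int.induction_on with
  | zero => exact hiso ((shiftFunctorZero T ℤ).app X).symm hX
  | succ n hn => exact hiso ((shiftFunctorAdd' T (n : ℤ) 1 (n + 1) rfl).symm.app X) (hup hn)
  | pred n hn =>
      exact hiso ((shiftFunctorAdd' T (-n : ℤ) (-1) (-n - 1) (by ring)).symm.app X) (hdown hn)

end Orthogonality

section LocalizationTriangles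

variable {T : Type u} [Category.{v} T]

lemma ReflectionData.IsReflection.mem_localObjects_of_retraction {R : ReflectionData T}
    (hrefl : R.IsReflection) {X : T} (r : R.L.obj X ⟶ X) (hr : R.unit.app X ≫ r = 𝟙 X) :
    X ∈ R.localObjects := by
  have hr' : r ≫ R.unit.app X = 𝟙 (R.L.obj X) :=
    (hrefl (R.L.obj_mem_essImage X) (R.unit.app X)).unique
      (by dsimp; rw [reassoc_of% hr]) (comp_id _)
  exact ⟨X, ⟨⟨r, R.unit.app X, hr', hr⟩⟩⟩

lemma CoreflectionData.IsCoreflection.mem_colocalObjects_of_section {Q : CoreflectionData T}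
    (hcorefl : Q.IsCoreflection) {X : T} (s : X ⟶ Q.C.obj X)
    (hs : s ≫ Q.counit.app X = 𝟙 X) :
    X ∈ Q.colocalObjects := by
  have hs' : Q.counit.app X ≫ s = 𝟙 (Q.C.obj X) :=
    (hcorefl (Q.C.obj_mem_essImage X) (Q.counit.app X)).unique
      (by dsimp; rw [assoc, hs, comp_id]) (id_comp _)
  exact ⟨X, ⟨⟨Q.counit.app X, s, hs', hs⟩⟩⟩

variable [HasZeroObject T] [Preadditive T] [HasShift T ℤ]
  [∀ n : ℤ, (shiftFunctor T n).Additive] [Pretriangulated T]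

def HasLocalizationTriangles (R : ReflectionData T) (Q : CoreflectionData T) : Prop :=
  ∀ X : T, ∃ w : R.L.obj X ⟶ (Q.C.obj X)⟦(1:ℤ)⟧,
    Triangle.mk (Q.counit.app X) (R.unit.app X) w ∈ distTriang T

namespace HasLocalizationTriangles

variable {R : ReflectionData T} {Q : CoreflectionData T}

lemma unit_app_eq_zero_iff (htri : HasLocalizationTriangles R Q) (hcorefl : Q.IsCoreflection)
    {X : T} : R.unit.app X = 0 ↔ X ∈ Q.colocalObjects := by
  obtain ⟨w, hw⟩ := htri X
  constructor
  · intro hunit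
    obtain ⟨s, hs⟩ := Triangle.coyoneda_exact₂ _ hw (𝟙 X) ((id_comp _).trans hunit)
    exact hcorefl.mem_colocalObjects_of_section s hs.symm
  · intro hX
    obtain ⟨s, hs, -⟩ := hcorefl hX (𝟙 X)
    have hcomp : Q.counit.app X ≫ R.unit.app X = 0 := comp_distTriang_mor_zero₁₂ _ hw
    calc R.unit.app X = s ≫ Q.counit.app X ≫ R.unit.app X := by rw [reassoc_of% hs]
      _ = 0 := by rw [hcomp, comp_zero]

lemma counit_app_eq_zero_iff (htri : HasLocalizationTriangles R Q) (hrefl : R.IsReflection)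
    {X : T} : Q.counit.app X = 0 ↔ X ∈ R.localObjects := by
  obtain ⟨w, hw⟩ := htri X
  constructor
  · intro hcounit
    obtain ⟨r, hr⟩ := Triangle.yoneda_exact₂ _ hw (𝟙 X) ((comp_id _).trans hcounit)
    exact hrefl.mem_localObjects_of_retraction r hr.symm
  · intro hX
    obtain ⟨r, hr, -⟩ := hrefl hX (𝟙 X)
    have hcomp : Q.counit.app X ≫ R.unit.app X = 0 := comp_distTriang_mor_zero₁₂ _ hw
    calc Q.counit.app X = Q.counit.app X ≫ R.unit.app X ≫ r := by
          rw [hr]; exact (comp_id _).symm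
      _ = 0 := by rw [reassoc_of% hcomp, zero_comp]

lemma hom_eq_zero (htri : HasLocalizationTriangles R Q) (hrefl : R.IsReflection)
    (hcorefl : Q.IsCoreflection) {W Y : T} (hW : W ∈ Q.colocalObjects)
    (hY : Y ∈ R.localObjects) (f : W ⟶ Y) : f = 0 := by
  obtain ⟨g, rfl, -⟩ := hrefl hY f
  rw [(htri.unit_app_eq_zero_iff hcorefl).2 hW, zero_comp]

lemma colocalObjects_eq_leftOrth (htri : HasLocalizationTriangles R Q)
    (hrefl : R.IsReflection) (hcorefl : Q.IsCoreflection)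
    (hshift : ∀ Y ∈ R.localObjects, ∀ k : ℤ, Y⟦k⟧ ∈ R.localObjects) :
    Q.colocalObjects = leftOrth R.localObjects := by
  ext X
  refine ⟨fun hX E hE k f => htri.hom_eq_zero hrefl hcorefl hX (hshift E hE k) f, fun hX => ?_⟩
  exact (htri.unit_app_eq_zero_iff hcorefl).1
    (hom_eq_zero_of_mem_leftOrth hX (R.L.obj_mem_essImage X) _)

lemma localObjects_eq_rightOrth (htri : HasLocalizationTriangles R Q)
    (hrefl : R.IsReflection) (hcorefl : Q.IsCoreflection)
    (hshift : ∀ W ∈ Q.colocalObjects, ∀ k : ℤ, W⟦k⟧ ∈ Q.colocalObjects) :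
    R.localObjects = rightOrth Q.colocalObjects := by
  ext Y
  refine ⟨fun hY E hE k f => htri.hom_eq_zero hrefl hcorefl (hshift E hE k) hY f, fun hY => ?_⟩
  exact (htri.counit_app_eq_zero_iff hrefl).1
    (hom_eq_zero_of_mem_rightOrth hY (Q.C.obj_mem_essImage Y) _)

end HasLocalizationTriangles

end LocalizationTriangles

section Statements

variable {T : Type u} [Category.{v} T] [HasZeroObject T] [Preadditive T] [HasShift T ℤ]
  [∀ n : ℤ, (shiftFunctor T n).Additive] [Pretriangulated T]
  [HasProducts.{v} T] [HasCoproducts.{v} T]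

/-- If `L` is a semiexact reflection and `C` the associated semiexact coreflection
(so that `CX → X → LX → ΣCX` is distinguished for every `X`), then `L` is exact if and only if
`C` is exact, and in that case `𝓒 = ^⊥𝓛` and `𝓛 = 𝓒^⊥`. -/
theorem statement6 (R : ReflectionData T) (Q : CoreflectionData T)
    (hrefl : R.IsReflection) (hsemi : IsSemicolocalizing R.localObjects)
    (hcorefl : Q.IsCoreflection) (hsemi' : IsSemilocalizing Q.colocalObjects)
    (htri : ∀ X : T, ∃ w : R.L.obj X ⟶ (Q.C.obj X)⟦(1:ℤ)⟧,
        Triangle.mk (Q.counit.app X) (R.unit.app X) w ∈ distTriang T) :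
    (IsColocalizing R.localObjects ↔ IsLocalizing Q.colocalObjects) ∧
    (IsColocalizing R.localObjects →
      Q.colocalObjects = leftOrth R.localObjects ∧
      R.localObjects = rightOrth Q.colocalObjects) := by
  have htri : HasLocalizationTriangles R Q := htri
  have hC (h : IsColocalizing R.localObjects) :
      Q.colocalObjects = leftOrth R.localObjects :=
    htri.colocalObjects_eq_leftOrth hrefl hcorefl fun _ hY =>
      shift_mem_of_closedUnderFibres_of_closedUnderCofibres
        (fun _ _ e => Functor.essImage.ofIso e) h.2.1 h.2.2.1 hY
  have hL (h : IsLocalizing Q.colocalObjects) :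
      R.localObjects = rightOrth Q.colocalObjects :=
    htri.localObjects_eq_rightOrth hrefl hcorefl fun _ hW =>
      shift_mem_of_closedUnderFibres_of_closedUnderCofibres
        (fun _ _ e => Functor.essImage.ofIso e) h.2.1 h.2.2.1 hW
  have hiff : IsColocalizing R.localObjects ↔ IsLocalizing Q.colocalObjects :=
    ⟨fun h => ⟨hsemi'.1, hC h ▸ closedUnderFibres_leftOrth _, hsemi'.2.1, hsemi'.2.2⟩,
      fun h => ⟨hsemi.1, hsemi.2.1, hL h ▸ closedUnderCofibres_rightOrth _, hsemi.2.2⟩⟩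
  exact ⟨hiff, fun h => ⟨hC h, hL (hiff.1 h)⟩⟩

end Statements

end Paper
end
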